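/- arXiv:1109.2080 — 5 statements merged into one kernel-verified Lean document; each statement's English description precedes it below -/
import Mathlib

section
/- Let A : ℝ → ℂ^{n×n} be a Hermitian matrix function depending analytically on ω, with analytic eigenvalue functions λ̃₁, …, λ̃ₙ : ℝ → ℝ and analytic, pointwise orthonormal eigenvector functions v₁, …, vₙ : ℝ → ℂⁿ satisfying A(ω)vⱼ(ω) = λ̃ⱼ(ω)vⱼ(ω) for all ω. Then for every j and every ω ∈ ℝ, the second derivative of the eigenvalue satisfies d²λ̃ⱼ(ω)/dω² = vⱼ(ω)* (d²A(ω)/dω²) vⱼ(ω) + 2 Σ_{k : λ̃ₖ(ω) ≠ λ̃ⱼ(ω)} |vₖ(ω)* (dA(ω)/dω) vⱼ(ω)|² / (λ̃ⱼ(ω) − λ̃ₖ(ω)). -/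
open Matrix
open scoped InnerProductSpace

/-!
Differentiating the Rayleigh identity `λ = v* A v` (with `v* v = 1`, so `Re (v* v') = 0`) gives
the Hellmann–Feynman formula `λ' = v* A' v`, and differentiating once more gives
`λ'' = v* A'' v + 2 Re (v* A' v')`. Expanding `v'` in the orthonormal eigenbasis `(vₖ)`, the
differentiated eigen-equation `A' v + A v' = λ' v + λ v'` yields
`(λⱼ - λₖ) vₖ* v' = vₖ* A' vⱼ` for `k ≠ j`; the terms with `λₖ = λⱼ`, `k ≠ j` thus vanish, the
term `k = j` vanishes because `vⱼ* A' vⱼ` is real and `vⱼ* v'` is purely imaginary, and the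
remaining terms are `|vₖ* A' vⱼ|² / (λⱼ - λₖ)`.
-/

section EntrywiseDerivatives

variable {ι m 𝕜 : Type*} [RCLike 𝕜] {t : ℝ}

theorem hasDerivAt_dotProduct [Fintype ι] {a b : ℝ → ι → 𝕜} {a' b' : ι → 𝕜}
    (ha : ∀ i, HasDerivAt (fun s => a s i) (a' i) t)
    (hb : ∀ i, HasDerivAt (fun s => b s i) (b' i) t) :
    HasDerivAt (fun s => a s ⬝ᵥ b s) (a' ⬝ᵥ b t + a t ⬝ᵥ b') t := by
  simp only [dotProduct, ← Finset.sum_add_distrib]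
  exact HasDerivAt.fun_sum fun i _ => (ha i).mul (hb i)

theorem hasDerivAt_mulVec_apply [Fintype ι] {M : ℝ → Matrix m ι 𝕜} {M' : Matrix m ι 𝕜}
    {b : ℝ → ι → 𝕜} {b' : ι → 𝕜} (hM : ∀ i k, HasDerivAt (fun s => M s i k) (M' i k) t)
    (hb : ∀ k, HasDerivAt (fun s => b s k) (b' k) t) (i : m) :
    HasDerivAt (fun s => (M s *ᵥ b s) i) ((M' *ᵥ b t + M t *ᵥ b') i) t :=
  hasDerivAt_dotProduct (hM i) hb

theorem hasDerivAt_star_dotProduct_mulVec [Fintype ι] [Fintype m] {a : ℝ → m → 𝕜} {a' : m → 𝕜}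
    {M : ℝ → Matrix m ι 𝕜} {M' : Matrix m ι 𝕜} {b : ℝ → ι → 𝕜} {b' : ι → 𝕜}
    (ha : ∀ i, HasDerivAt (fun s => a s i) (a' i) t)
    (hM : ∀ i k, HasDerivAt (fun s => M s i k) (M' i k) t)
    (hb : ∀ k, HasDerivAt (fun s => b s k) (b' k) t) :
    HasDerivAt (fun s => star (a s) ⬝ᵥ M s *ᵥ b s)
      (star a' ⬝ᵥ M t *ᵥ b t + star (a t) ⬝ᵥ M' *ᵥ b t + star (a t) ⬝ᵥ M t *ᵥ b') t := by
  simpa only [dotProduct_add, add_assoc] using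
    hasDerivAt_dotProduct (a := fun s => star (a s)) (a' := star a') (fun i => (ha i).star)
      (hasDerivAt_mulVec_apply hM hb)

theorem star_dotProduct_add_star_dotProduct_eq_zero [Fintype ι] {a : ℝ → ι → 𝕜} {a' : ι → 𝕜}
    (ha : ∀ i, HasDerivAt (fun s => a s i) (a' i) t) (hunit : ∀ s, star (a s) ⬝ᵥ a s = 1) :
    star a' ⬝ᵥ a t + star (a t) ⬝ᵥ a' = 0 := by
  have h := hasDerivAt_dotProduct (a := fun s => star (a s)) (a' := star a')
    (fun i => (ha i).star) ha
  simp only [hunit] at h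
  exact h.unique (hasDerivAt_const t 1)

theorem isHermitian_of_hasDerivAt {M : ℝ → Matrix ι ι 𝕜} {M' : Matrix ι ι 𝕜}
    (hM : ∀ s, (M s).IsHermitian) (hM' : ∀ i k, HasDerivAt (fun s => M s i k) (M' i k) t) :
    M'.IsHermitian := by
  ext i k
  refine (hM' k i).star.unique ?_
  simpa only [(hM _).apply] using hM' i k

theorem ofReal_deriv_eq_of_hasDerivAt {f : ℝ → ℝ} {z : 𝕜}
    (h : HasDerivAt (fun s => (f s : 𝕜)) z t) : ((deriv f t : ℝ) : 𝕜) = z := by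
  have hre : HasDerivAt f (RCLike.re z) t := by
    simpa [Function.comp_def] using (RCLike.reCLM (K := 𝕜)).hasFDerivAt.comp_hasDerivAt t h
  have him : HasDerivAt (fun _ => (0 : ℝ)) (RCLike.im z) t := by
    simpa [Function.comp_def] using (RCLike.imCLM (K := 𝕜)).hasFDerivAt.comp_hasDerivAt t h
  rw [hre.deriv]
  apply RCLike.ext <;> simp [him.unique (hasDerivAt_const t 0)]

end EntrywiseDerivatives

theorem Matrix.IsHermitian.star_dotProduct_mulVec {ι R : Type*} [Fintype ι] [NonUnitalSemiring R]
    [StarRing R] {M : Matrix ι ι R} (hM : M.IsHermitian) (x y : ι → R) :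
    star x ⬝ᵥ M *ᵥ y = star (star y ⬝ᵥ M *ᵥ x) := by
  rw [star_dotProduct, star_mulVec, ← dotProduct_mulVec, hM.eq]

section EigenvalueDerivatives

variable {ι 𝕜 : Type*} [Fintype ι] [RCLike 𝕜] {t : ℝ}

/-- The Hellmann–Feynman formula. -/
theorem hasDerivAt_ofReal_eigenvalue {M : ℝ → Matrix ι ι 𝕜} {M' : Matrix ι ι 𝕜}
    {a : ℝ → ι → 𝕜} {a' : ι → 𝕜} {μ : ℝ → ℝ} (hM : ∀ s, (M s).IsHermitian)
    (hM' : ∀ i k, HasDerivAt (fun s => M s i k) (M' i k) t)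
    (ha : ∀ i, HasDerivAt (fun s => a s i) (a' i) t)
    (heig : ∀ s, M s *ᵥ a s = (μ s : 𝕜) • a s) (hunit : ∀ s, star (a s) ⬝ᵥ a s = 1) :
    HasDerivAt (fun s => (μ s : 𝕜)) (star (a t) ⬝ᵥ M' *ᵥ a t) t := by
  have hrayleigh : (fun s => (μ s : 𝕜)) = fun s => star (a s) ⬝ᵥ M s *ᵥ a s := by
    ext s
    rw [heig, dotProduct_smul, hunit, smul_eq_mul, mul_one]
  have hleft : star a' ⬝ᵥ M t *ᵥ a t = μ t * (star a' ⬝ᵥ a t) := by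
    rw [heig, dotProduct_smul, smul_eq_mul]
  have hright : star (a t) ⬝ᵥ M t *ᵥ a' = μ t * (star (a t) ⬝ᵥ a') := by
    rw [(hM t).star_dotProduct_mulVec, hleft, star_mul', ← star_dotProduct, RCLike.star_def,
      RCLike.conj_ofReal]
  rw [hrayleigh]
  convert hasDerivAt_star_dotProduct_mulVec ha hM' ha using 1
  linear_combination -(μ t : 𝕜) * star_dotProduct_add_star_dotProduct_eq_zero ha hunit
    - hleft - hright

theorem ofReal_deriv_deriv_eigenvalue {M M' : ℝ → Matrix ι ι 𝕜} {M'' : Matrix ι ι 𝕜}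
    {a a' : ℝ → ι → 𝕜} {μ : ℝ → ℝ} (hM : ∀ s, (M s).IsHermitian)
    (hM' : ∀ i k s, HasDerivAt (fun r => M r i k) (M' s i k) s)
    (hM'' : ∀ i k, HasDerivAt (fun r => M' r i k) (M'' i k) t)
    (ha : ∀ s i, HasDerivAt (fun r => a r i) (a' s i) s)
    (heig : ∀ s, M s *ᵥ a s = (μ s : 𝕜) • a s) (hunit : ∀ s, star (a s) ⬝ᵥ a s = 1) :
    ((deriv (deriv μ) t : ℝ) : 𝕜) =
      star (a' t) ⬝ᵥ M' t *ᵥ a t + star (a t) ⬝ᵥ M'' *ᵥ a t + star (a t) ⬝ᵥ M' t *ᵥ a' t := by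
  refine ofReal_deriv_eq_of_hasDerivAt ?_
  simpa only [← fun s => ofReal_deriv_eq_of_hasDerivAt
    (hasDerivAt_ofReal_eigenvalue hM (hM' · · s) (ha s) heig hunit)] using
    hasDerivAt_star_dotProduct_mulVec (ha t) hM'' (ha t)

theorem mulVec_add_mulVec_eq_of_hasDerivAt {M : ℝ → Matrix ι ι 𝕜} {M' : Matrix ι ι 𝕜}
    {a : ℝ → ι → 𝕜} {a' : ι → 𝕜} {μ : ℝ → 𝕜} {μ' : 𝕜}
    (hM : ∀ i k, HasDerivAt (fun s => M s i k) (M' i k) t)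
    (ha : ∀ i, HasDerivAt (fun s => a s i) (a' i) t) (hμ : HasDerivAt μ μ' t)
    (heig : ∀ s, M s *ᵥ a s = μ s • a s) :
    M' *ᵥ a t + M t *ᵥ a' = μ' • a t + μ t • a' := by
  ext i
  refine (hasDerivAt_mulVec_apply hM ha i).unique ?_
  simpa only [heig, Pi.add_apply, Pi.smul_apply, smul_eq_mul] using hμ.fun_mul (ha i)

end EigenvalueDerivatives

section Perturbation

open RCLike ComplexConjugate

variable {ι 𝕜 E : Type*} [Fintype ι] [RCLike 𝕜] [NormedAddCommGroup E]
  [InnerProductSpace 𝕜 E]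

theorem LinearMap.IsSymmetric.inner_apply_eq_mul_of_apply_eq_smul {T : E →ₗ[𝕜] E}
    (hT : T.IsSymmetric) {u : E} {μ : ℝ} (hu : T u = (μ : 𝕜) • u) (x : E) :
    ⟪u, T x⟫_𝕜 = μ * ⟪u, x⟫_𝕜 := by
  rw [← hT, hu, inner_smul_left, conj_ofReal]

theorem eigengap_mul_inner_eq_inner_apply {T B : E →ₗ[𝕜] E} (hT : T.IsSymmetric)
    (b : OrthonormalBasis ι 𝕜 E) {μ : ι → ℝ} (hTb : ∀ k, T (b k) = (μ k : 𝕜) • b k) {j : ι}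
    {w : E} {c : 𝕜} (hw : B (b j) + T w = c • b j + (μ j : 𝕜) • w) {k : ι} (hk : k ≠ j) :
    ((μ j : 𝕜) - μ k) * ⟪b k, w⟫_𝕜 = ⟪b k, B (b j)⟫_𝕜 := by
  have h := congrArg (inner 𝕜 (b k)) hw
  rw [inner_add_right, inner_add_right, hT.inner_apply_eq_mul_of_apply_eq_smul (hTb k),
    inner_smul_right, inner_smul_right, b.orthonormal.2 hk] at h
  linear_combination -h

theorem inner_apply_add_inner_apply_eq_sum {B : E →ₗ[𝕜] E} (hB : B.IsSymmetric)
    (b : OrthonormalBasis ι 𝕜 E) (x y : E) :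
    ⟪y, B x⟫_𝕜 + ⟪x, B y⟫_𝕜 =
      ∑ k, (⟪b k, B x⟫_𝕜 * conj ⟪b k, y⟫_𝕜 + conj ⟪b k, B x⟫_𝕜 * ⟪b k, y⟫_𝕜) := by
  rw [← hB x y, ← inner_conj_symm y (B x), ← b.sum_inner_mul_inner, map_sum,
    ← Finset.sum_add_distrib]
  refine Finset.sum_congr rfl fun k _ => ?_
  rw [← inner_conj_symm (B x) (b k), map_mul, conj_conj, add_comm]

theorem inner_apply_add_inner_apply_eq_sum_div_eigengap {T B : E →ₗ[𝕜] E}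
    (hT : T.IsSymmetric) (hB : B.IsSymmetric) (b : OrthonormalBasis ι 𝕜 E) {μ : ι → ℝ}
    (hTb : ∀ k, T (b k) = (μ k : 𝕜) • b k) {j : ι} {w : E} {c : 𝕜}
    (hw : B (b j) + T w = c • b j + (μ j : 𝕜) • w) (hre : ⟪w, b j⟫_𝕜 + ⟪b j, w⟫_𝕜 = 0) :
    ⟪w, B (b j)⟫_𝕜 + ⟪b j, B w⟫_𝕜 =
      2 * ∑ k ∈ Finset.univ.filter (fun k => μ k ≠ μ j),
        ((‖⟪b k, B (b j)⟫_𝕜‖ : ℝ) : 𝕜) ^ 2 / ((μ j : 𝕜) - μ k) := by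
  rw [inner_apply_add_inner_apply_eq_sum hB b, ← Finset.sum_filter_add_sum_filter_not _
    (fun k => μ k ≠ μ j), Finset.mul_sum, add_eq_left.mpr]
  · refine Finset.sum_congr rfl fun k hk => ?_
    have hμ : μ k ≠ μ j := (Finset.mem_filter.mp hk).2
    have hd : (μ j : 𝕜) - μ k ≠ 0 := by exact_mod_cast sub_ne_zero.mpr hμ.symm
    rw [← mul_conj, ← eigengap_mul_inner_eq_inner_apply hT b hTb hw (ne_of_apply_ne μ hμ)]
    simp only [map_mul, map_sub, conj_ofReal]
    field_simp
    ring
  · refine Finset.sum_eq_zero fun k hk => ?_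
    have hμ : μ k = μ j := not_not.mp (Finset.mem_filter.mp hk).2
    obtain rfl | hkj := eq_or_ne k j
    · rw [← hB.coe_re_inner_self_apply, conj_ofReal, inner_conj_symm, ← mul_add, hre,
        mul_zero]
    · rw [← eigengap_mul_inner_eq_inner_apply hT b hTb hw hkj, hμ, sub_self, zero_mul]
      simp

end Perturbation

section Euclidean

variable {ι 𝕜 : Type*} [Fintype ι] [RCLike 𝕜]

theorem EuclideanSpace.star_dotProduct_eq_inner (x y : EuclideanSpace 𝕜 ι) :
    star x.ofLp ⬝ᵥ y.ofLp = ⟪x, y⟫_𝕜 := by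
  rw [EuclideanSpace.inner_eq_star_dotProduct, dotProduct_comm]

theorem EuclideanSpace.star_dotProduct_mulVec_eq_inner [DecidableEq ι] (M : Matrix ι ι 𝕜)
    (x y : EuclideanSpace 𝕜 ι) : star x.ofLp ⬝ᵥ M *ᵥ y.ofLp = ⟪x, M.toEuclideanLin y⟫_𝕜 := by
  rw [← EuclideanSpace.star_dotProduct_eq_inner]
  rfl

theorem EuclideanSpace.star_dotProduct_self_eq_one {x : EuclideanSpace 𝕜 ι} (hx : ‖x‖ = 1) :
    star x.ofLp ⬝ᵥ x.ofLp = 1 := by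
  rw [EuclideanSpace.star_dotProduct_eq_inner, inner_self_eq_norm_sq_to_K, hx]
  norm_num

end Euclidean

theorem Orthonormal.exists_orthonormalBasis_coe_eq {ι 𝕜 E : Type*} [Fintype ι] [RCLike 𝕜]
    [NormedAddCommGroup E] [InnerProductSpace 𝕜 E] [FiniteDimensional 𝕜 E] {u : ι → E}
    (hu : Orthonormal 𝕜 u) (hcard : Fintype.card ι = Module.finrank 𝕜 E) :
    ∃ b : OrthonormalBasis ι 𝕜 E, ⇑b = u :=
  ⟨.mk hu (hu.linearIndependent.span_eq_top_of_card_eq_finrank' hcard).ge,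
    OrthonormalBasis.coe_mk _ _⟩

theorem second_deriv_eigenvalue_formula_general
    (n : ℕ) (A A' A'' : ℝ → Matrix (Fin n) (Fin n) ℂ)
    (hHerm : ∀ ω : ℝ, (A ω).IsHermitian)
    (hA' : ∀ i j : Fin n, ∀ ω : ℝ, HasDerivAt (fun t : ℝ => A t i j) (A' ω i j) ω)
    (hA'' : ∀ i j : Fin n, ∀ ω : ℝ, HasDerivAt (fun t : ℝ => A' t i j) (A'' ω i j) ω)
    (lam : Fin n → ℝ → ℝ)
    (v : Fin n → ℝ → EuclideanSpace ℂ (Fin n))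
    (hvAnal : ∀ j i : Fin n, ∀ x : ℝ, AnalyticAt ℝ (fun ω : ℝ => v j ω i) x)
    (heig : ∀ j : Fin n, ∀ ω : ℝ, (A ω).mulVec (v j ω) = (lam j ω : ℂ) • v j ω)
    (hnorm : ∀ j : Fin n, ∀ ω : ℝ, ‖v j ω‖ = 1)
    (horth : ∀ j k : Fin n, ∀ ω : ℝ, j ≠ k → ⟪v j ω, v k ω⟫_ℂ = 0) :
    ∀ j : Fin n, ∀ ω : ℝ,
      ((deriv (deriv (lam j)) ω : ℝ) : ℂ) =
        star (v j ω) ⬝ᵥ (A'' ω).mulVec (v j ω) +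
          2 * ∑ k ∈ Finset.univ.filter (fun k : Fin n => lam k ω ≠ lam j ω),
            ((‖star (v k ω) ⬝ᵥ (A' ω).mulVec (v j ω)‖ : ℝ) : ℂ) ^ 2 /
              (((lam j ω : ℝ) : ℂ) - ((lam k ω : ℝ) : ℂ)) := by
  intro j ω
  set v' : ℝ → Fin n → ℂ := fun t i => deriv (fun s => v j s i) t
  have hv : ∀ t i, HasDerivAt (fun s => v j s i) (v' t i) t :=
    fun t i => (hvAnal j i t).differentiableAt.hasDerivAt
  have hunit (s : ℝ) := EuclideanSpace.star_dotProduct_self_eq_one (hnorm j s)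
  have hlam'' : ((deriv (deriv (lam j)) ω : ℝ) : ℂ) = _ :=
    ofReal_deriv_deriv_eigenvalue (a := fun s => (v j s).ofLp) hHerm hA' (hA'' · · ω) hv
      (heig j) hunit
  have hlam' := hasDerivAt_ofReal_eigenvalue (a := fun s => (v j s).ofLp) hHerm (hA' · · ω)
    (hv ω) (heig j) hunit
  have hw : (A' ω).toEuclideanLin (v j ω) + (A ω).toEuclideanLin (.toLp 2 (v' ω))
      = (star (v j ω) ⬝ᵥ A' ω *ᵥ v j ω) • v j ω + (lam j ω : ℂ) • .toLp 2 (v' ω) :=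
    WithLp.ofLp_injective 2 <| mulVec_add_mulVec_eq_of_hasDerivAt
      (a := fun s => (v j s).ofLp) (hA' · · ω) (hv ω) hlam' (heig j)
  have hre : ⟪.toLp 2 (v' ω), v j ω⟫_ℂ + ⟪v j ω, .toLp 2 (v' ω)⟫_ℂ = 0 := by
    rw [← EuclideanSpace.star_dotProduct_eq_inner, ← EuclideanSpace.star_dotProduct_eq_inner]
    exact star_dotProduct_add_star_dotProduct_eq_zero (a := fun s => (v j s).ofLp) (hv ω)
      hunit
  obtain ⟨b, hb⟩ := Orthonormal.exists_orthonormalBasis_coe_eq (𝕜 := ℂ) (u := fun k => v k ω)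
    ⟨fun k => hnorm k ω, fun k l => horth k l ω⟩ (by simp)
  rw [show v j ω = b j by rw [hb]] at hw hre
  have hcross := inner_apply_add_inner_apply_eq_sum_div_eigengap
    (Matrix.isSymmetric_toEuclideanLin_iff.mpr (hHerm ω))
    (Matrix.isSymmetric_toEuclideanLin_iff.mpr (isHermitian_of_hasDerivAt hHerm (hA' · · ω)))
    b (μ := fun k => lam k ω) (fun k => by rw [hb]; exact WithLp.ofLp_injective 2 (heig k ω))
    hw hre
  simp only [hb, ← EuclideanSpace.star_dotProduct_mulVec_eq_inner] at hcross
  rw [hlam'']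
  linear_combination hcross

/-- **Second derivative of an eigenvalue of an analytic Hermitian matrix function.**
Let `A : ℝ → ℂ^{n×n}` be Hermitian with real-analytic entries, with entrywise first
and second derivatives `A'` and `A''`, analytic eigenvalue functions `λ̃₁, …, λ̃ₙ` and
analytic, pointwise orthonormal unit eigenvector functions `v₁, …, vₙ`. Then
`d²λ̃ⱼ(ω)/dω² = vⱼ* A'' vⱼ + 2 Σ_{k : λ̃ₖ(ω) ≠ λ̃ⱼ(ω)} |vₖ* A' vⱼ|² / (λ̃ⱼ(ω) − λ̃ₖ(ω))`. -/
theorem second_deriv_eigenvalue_formula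
    (n : ℕ) (A A' A'' : ℝ → Matrix (Fin n) (Fin n) ℂ)
    (hAnal : ∀ i j : Fin n, ∀ x : ℝ, AnalyticAt ℝ (fun ω : ℝ => A ω i j) x)
    (hHerm : ∀ ω : ℝ, (A ω).IsHermitian)
    (hA' : ∀ i j : Fin n, ∀ ω : ℝ, HasDerivAt (fun t : ℝ => A t i j) (A' ω i j) ω)
    (hA'' : ∀ i j : Fin n, ∀ ω : ℝ, HasDerivAt (fun t : ℝ => A' t i j) (A'' ω i j) ω)
    (lam : Fin n → ℝ → ℝ)
    (hlamAnal : ∀ j : Fin n, ∀ x : ℝ, AnalyticAt ℝ (lam j) x)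
    (v : Fin n → ℝ → EuclideanSpace ℂ (Fin n))
    (hvAnal : ∀ j i : Fin n, ∀ x : ℝ, AnalyticAt ℝ (fun ω : ℝ => v j ω i) x)
    (heig : ∀ j : Fin n, ∀ ω : ℝ, (A ω).mulVec (v j ω) = (lam j ω : ℂ) • v j ω)
    (hnorm : ∀ j : Fin n, ∀ ω : ℝ, ‖v j ω‖ = 1)
    (horth : ∀ j k : Fin n, ∀ ω : ℝ, j ≠ k → ⟪v j ω, v k ω⟫_ℂ = 0) :
    ∀ j : Fin n, ∀ ω : ℝ,
      ((deriv (deriv (lam j)) ω : ℝ) : ℂ) =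
        star (v j ω) ⬝ᵥ (A'' ω).mulVec (v j ω) +
          2 * ∑ k ∈ Finset.univ.filter (fun k : Fin n => lam k ω ≠ lam j ω),
            ((‖star (v k ω) ⬝ᵥ (A' ω).mulVec (v j ω)‖ : ℝ) : ℂ) ^ 2 /
              (((lam j ω : ℝ) : ℂ) - ((lam k ω : ℝ) : ℂ)) :=
  second_deriv_eigenvalue_formula_general n A A' A'' hHerm hA' hA'' lam v hvAnal heig hnorm horth
end

section
/- Let f₁, …, fₙ : ℝ → ℝ be real-analytic functions and let γ > 0 satisfy |fⱼ''(x)| ≤ γ for all x ∈ ℝ and all j = 1, …, n. Let f : ℝ → ℝ be a continuous function such that f(x) ∈ {f₁(x), …, fₙ(x)} for every x ∈ ℝ. Fix xₖ ∈ ℝ and define the piecewise quadratic model qₖ(x) := f(xₖ) + (max_{j=1,…,n} fⱼ'(xₖ))(x − xₖ) − (γ/2)(x − xₖ)² for x < xₖ, and qₖ(x) := f(xₖ) + (min_{j=1,…,n} fⱼ'(xₖ))(x − xₖ) − (γ/2)(x − xₖ)² for x ≥ xₖ. Then f(x) ≥ qₖ(x) for all x ∈ ℝ. -/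
/-!
Subtracting the model `q(x) = f(xₖ) + μ (x - xₖ) - γ/2 (x - xₖ)²` from a piece `fⱼ` leaves a
function whose derivative `fⱼ'(x) - μ + γ (x - xₖ)` has a sign on each side of `xₖ`: since `fⱼ'` is
`γ`-Lipschitz, it is `≥ 0` on `[xₖ, ∞)` when `μ ≤ fⱼ'(xₖ)` and `≤ 0` on `(-∞, xₖ]` when
`fⱼ'(xₖ) ≤ μ`. With `μ = min_j fⱼ'(xₖ)` (resp. `max_j fⱼ'(xₖ)`) every `fⱼ - q` is monotone
(resp. antitone) there, and a continuous function that at every point coincides with one of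
finitely many continuous monotone functions is itself monotone. Hence `f - q` grows away from
`xₖ`, where it vanishes.
-/

open Set Filter Topology

section Selection

variable {ι α β : Type*} [Finite ι] [TopologicalSpace α]
  [LinearOrder β] [TopologicalSpace β] [OrderClosedTopology β]
  {g : ι → α → β} {h : α → β} {s : Set α}

-- Continuous induction on `[a, b]`, applied to the closed set `{y | h a ≤ h y}`.
theorem monotoneOn_of_eventually_nhdsGT_le
    [ConditionallyCompleteLinearOrder α] [OrderTopology α] [DenselyOrdered α]
    (hs : s.OrdConnected) (hc : ContinuousOn h s)
    (hloc : ∀ x ∈ s, s ∈ 𝓝[>] x → ∀ᶠ y in 𝓝[>] x, h x ≤ h y) :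
    MonotoneOn h s := by
  intro a ha b hb hab
  have hab_sub : Icc a b ⊆ s := hs.out ha hb
  have hclosed : IsClosed ({y | h a ≤ h y} ∩ Icc a b) := by
    rw [inter_comm]
    exact (hc.mono hab_sub).preimage_isClosed_of_isClosed isClosed_Icc isClosed_Ici
  refine hclosed.Icc_subset_of_forall_mem_nhdsWithin le_rfl (fun x ⟨hax, hx⟩ ↦ ?_) ⟨hab, le_rfl⟩
  have hIcc : Icc a b ∈ 𝓝[>] x := Icc_mem_nhdsGT_of_mem hx
  filter_upwards [hloc x (hab_sub (Ico_subset_Icc_self hx)) (mem_of_superset hIcc hab_sub)]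
    with y hy using hax.trans hy

-- Pigeonhole: some piece `g j` agrees with `h` at points accumulating at `x` from the right,
-- hence also at `x` by continuity.
theorem eventually_nhdsGT_le_of_continuousOn_selection [LinearOrder α]
    (hgc : ∀ j, ContinuousOn (g j) s) (hgm : ∀ j, MonotoneOn (g j) s) (hhc : ContinuousOn h s)
    (hsel : ∀ y ∈ s, ∃ j, h y = g j y) {x : α} (hx : x ∈ s) (hs : s ∈ 𝓝[>] x) :
    ∀ᶠ y in 𝓝[>] x, h x ≤ h y := by
  by_contra hcon
  have hfreq : ∃ᶠ y in 𝓝[>] x, ∃ j, h y = g j y ∧ h y < h x ∧ y ∈ s ∧ x < y := by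
    refine ((not_eventually.1 hcon).and_eventually
      (inter_mem hs self_mem_nhdsWithin)).mono fun y ⟨hlt, hys, hxy⟩ ↦ ?_
    obtain ⟨j, hj⟩ := hsel y hys
    exact ⟨j, hj, not_le.1 hlt, hys, hxy⟩
  obtain ⟨j, hj⟩ := frequently_exists.1 hfreq
  have hle : 𝓝[>] x ≤ 𝓝[s] x := nhdsWithin_le_of_mem hs
  have hxj : h x = g j x := tendsto_nhds_unique_of_frequently_eq
    ((hhc x hx).mono_left hle) ((hgc j x hx).mono_left hle) (hj.mono fun _ hy ↦ hy.1)
  obtain ⟨y, hyj, hyx, hys, hxy⟩ := hj.exists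
  exact hyx.not_ge (hxj ▸ hyj ▸ hgm j hx hys hxy.le)

theorem monotoneOn_of_continuousOn_selection
    [ConditionallyCompleteLinearOrder α] [OrderTopology α] [DenselyOrdered α] (hs : s.OrdConnected)
    (hgc : ∀ j, ContinuousOn (g j) s) (hgm : ∀ j, MonotoneOn (g j) s) (hhc : ContinuousOn h s)
    (hsel : ∀ x ∈ s, ∃ j, h x = g j x) : MonotoneOn h s :=
  monotoneOn_of_eventually_nhdsGT_le hs hhc fun _ hx hxs ↦
    eventually_nhdsGT_le_of_continuousOn_selection hgc hgm hhc hsel hx hxs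

theorem antitoneOn_of_continuousOn_selection
    [ConditionallyCompleteLinearOrder α] [OrderTopology α] [DenselyOrdered α] (hs : s.OrdConnected)
    (hgc : ∀ j, ContinuousOn (g j) s) (hgm : ∀ j, AntitoneOn (g j) s) (hhc : ContinuousOn h s)
    (hsel : ∀ x ∈ s, ∃ j, h x = g j x) : AntitoneOn h s :=
  (monotoneOn_of_continuousOn_selection (β := βᵒᵈ) hs hgc (fun j ↦ (hgm j).dual_right) hhc
    hsel).dual_right

end Selection

noncomputable def quadraticModel (c μ γ x₀ x : ℝ) : ℝ :=
  c + μ * (x - x₀) - γ / 2 * (x - x₀) ^ 2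

theorem hasDerivAt_quadraticModel (c μ γ x₀ x : ℝ) :
    HasDerivAt (quadraticModel c μ γ x₀) (μ - γ * (x - x₀)) x := by
  have hlin : HasDerivAt (fun x ↦ x - x₀) 1 x := (hasDerivAt_id x).sub_const x₀
  exact (((hlin.const_mul μ).const_add c).sub ((hlin.pow 2).const_mul (γ / 2))).congr_deriv
    (by norm_num; ring)

theorem continuous_quadraticModel (c μ γ x₀ : ℝ) : Continuous (quadraticModel c μ γ x₀) :=
  continuous_iff_continuousAt.2 fun x ↦ (hasDerivAt_quadraticModel c μ γ x₀ x).continuousAt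

theorem hasDerivAt_sub_quadraticModel {g : ℝ → ℝ} (hg : Differentiable ℝ g) (c μ γ x₀ x : ℝ) :
    HasDerivAt (fun x ↦ g x - quadraticModel c μ γ x₀ x)
      (deriv g x - (μ - γ * (x - x₀))) x :=
  (hg x).hasDerivAt.sub (hasDerivAt_quadraticModel c μ γ x₀ x)

section SecondDerivativeBound

variable {g : ℝ → ℝ} {γ : ℝ} (hg : Differentiable ℝ g) (hg' : Differentiable ℝ (deriv g))
  (hg'' : ∀ x, |deriv (deriv g) x| ≤ γ)
include hg' hg''

theorem abs_deriv_sub_deriv_le (x y : ℝ) : |deriv g y - deriv g x| ≤ γ * |y - x| := by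
  simpa only [Real.norm_eq_abs] using convex_univ.norm_image_sub_le_of_norm_deriv_le
    (fun z _ ↦ hg' z) (fun z _ ↦ hg'' z) (mem_univ x) (mem_univ y)

include hg

theorem monotoneOn_sub_quadraticModel (c : ℝ) {μ x₀ : ℝ} (hμ : μ ≤ deriv g x₀) :
    MonotoneOn (fun x ↦ g x - quadraticModel c μ γ x₀ x) (Ici x₀) := by
  have hd := hasDerivAt_sub_quadraticModel hg c μ γ x₀
  refine monotoneOn_of_hasDerivWithinAt_nonneg (convex_Ici x₀)
    (fun x _ ↦ (hd x).continuousAt.continuousWithinAt) (fun x _ ↦ (hd x).hasDerivWithinAt)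
    fun x hx ↦ ?_
  rw [interior_Ici] at hx
  have hlip := abs_le.1 (abs_deriv_sub_deriv_le hg' hg'' x₀ x)
  rw [abs_of_pos (sub_pos.2 hx)] at hlip
  linarith [hlip.1]

theorem antitoneOn_sub_quadraticModel (c : ℝ) {μ x₀ : ℝ} (hμ : deriv g x₀ ≤ μ) :
    AntitoneOn (fun x ↦ g x - quadraticModel c μ γ x₀ x) (Iic x₀) := by
  have hd := hasDerivAt_sub_quadraticModel hg c μ γ x₀
  refine antitoneOn_of_hasDerivWithinAt_nonpos (convex_Iic x₀)
    (fun x _ ↦ (hd x).continuousAt.continuousWithinAt) (fun x _ ↦ (hd x).hasDerivWithinAt)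
    fun x hx ↦ ?_
  rw [interior_Iic] at hx
  have hlip := abs_le.1 (abs_deriv_sub_deriv_le hg' hg'' x₀ x)
  rw [abs_of_neg (sub_neg.2 hx)] at hlip
  linarith [hlip.2]

end SecondDerivativeBound

theorem quadratic_model_le_piecewise_analytic_univariate_general
    (n : ℕ) (fs : Fin n → ℝ → ℝ)
    (hfs : ∀ j : Fin n, ∀ x : ℝ, AnalyticAt ℝ (fs j) x)
    (γ : ℝ)
    (hbound : ∀ j : Fin n, ∀ x : ℝ, |deriv (deriv (fs j)) x| ≤ γ)
    (f : ℝ → ℝ) (hf : Continuous f)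
    (hpiece : ∀ x : ℝ, ∃ j : Fin n, f x = fs j x)
    (xk : ℝ) :
    ∀ x : ℝ,
      (x < xk →
        f x ≥ f xk + (⨆ j : Fin n, deriv (fs j) xk) * (x - xk) - γ / 2 * (x - xk) ^ 2) ∧
      (xk ≤ x →
        f x ≥ f xk + (⨅ j : Fin n, deriv (fs j) xk) * (x - xk) - γ / 2 * (x - xk) ^ 2) := by
  have hg j : Differentiable ℝ (fs j) := fun x ↦ (hfs j x).differentiableAt
  have hg' j : Differentiable ℝ (deriv (fs j)) := fun x ↦ (hfs j x).deriv.differentiableAt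
  have hpiece_cont μ j : Continuous fun x ↦ fs j x - quadraticModel (f xk) μ γ xk x :=
    (hg j).continuous.sub (continuous_quadraticModel _ _ _ _)
  have hf_cont μ : Continuous fun x ↦ f x - quadraticModel (f xk) μ γ xk x :=
    hf.sub (continuous_quadraticModel _ _ _ _)
  have hsel μ (x : ℝ) : ∃ j,
      f x - quadraticModel (f xk) μ γ xk x = fs j x - quadraticModel (f xk) μ γ xk x :=
    (hpiece x).imp fun _ hj ↦ by rw [hj]
  intro x
  constructor
  · intro hx
    have hanti := antitoneOn_of_continuousOn_selection ordConnected_Iic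
      (fun j ↦ (hpiece_cont _ j).continuousOn)
      (fun j ↦ antitoneOn_sub_quadraticModel (hg j) (hg' j) (hbound j) (f xk)
        (le_ciSup (finite_range fun j ↦ deriv (fs j) xk).bddAbove j))
      (hf_cont _).continuousOn fun x _ ↦ hsel _ x
    have := hanti (mem_Iic.2 hx.le) (mem_Iic.2 le_rfl) hx.le
    simp only [quadraticModel] at this
    linarith
  · intro hx
    have hmono := monotoneOn_of_continuousOn_selection ordConnected_Ici
      (fun j ↦ (hpiece_cont _ j).continuousOn)
      (fun j ↦ monotoneOn_sub_quadraticModel (hg j) (hg' j) (hbound j) (f xk)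
        (ciInf_le (finite_range fun j ↦ deriv (fs j) xk).bddBelow j))
      (hf_cont _).continuousOn fun x _ ↦ hsel _ x
    have := hmono (mem_Ici.2 le_rfl) (mem_Ici.2 hx) hx
    simp only [quadraticModel] at this
    linarith

/-- **The one-dimensional quadratic model lies underneath a continuous piecewise
analytic function.** Let `f₁, …, fₙ : ℝ → ℝ` be real-analytic with `|fⱼ''(x)| ≤ γ`
for all `x` and `j`, and let `f : ℝ → ℝ` be continuous with `f(x) ∈ {f₁(x), …, fₙ(x)}`
for all `x`. Then for any `xₖ`, the piecewise quadratic model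
`qₖ(x) = f(xₖ) + (max_j fⱼ'(xₖ))(x − xₖ) − (γ/2)(x − xₖ)²` for `x < xₖ` and
`qₖ(x) = f(xₖ) + (min_j fⱼ'(xₖ))(x − xₖ) − (γ/2)(x − xₖ)²` for `x ≥ xₖ`
satisfies `f(x) ≥ qₖ(x)` for all `x ∈ ℝ`. -/
theorem quadratic_model_le_piecewise_analytic_univariate
    (n : ℕ) (fs : Fin n → ℝ → ℝ)
    (hfs : ∀ j : Fin n, ∀ x : ℝ, AnalyticAt ℝ (fs j) x)
    (γ : ℝ) (hγ : 0 < γ)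
    (hbound : ∀ j : Fin n, ∀ x : ℝ, |deriv (deriv (fs j)) x| ≤ γ)
    (f : ℝ → ℝ) (hf : Continuous f)
    (hpiece : ∀ x : ℝ, ∃ j : Fin n, f x = fs j x)
    (xk : ℝ) :
    ∀ x : ℝ,
      (x < xk →
        f x ≥ f xk + (⨆ j : Fin n, deriv (fs j) xk) * (x - xk) - γ / 2 * (x - xk) ^ 2) ∧
      (xk ≤ x →
        f x ≥ f xk + (⨅ j : Fin n, deriv (fs j) xk) * (x - xk) - γ / 2 * (x - xk) ^ 2) :=
  quadratic_model_le_piecewise_analytic_univariate_general n fs hfs γ hbound f hf hpiece xk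
end

section
/- Let f₁, …, fₙ : ℝ^d → ℝ be differentiable functions, each of which is real-analytic along every line in ℝ^d, and let γ > 0 satisfy |d²/dα² fⱼ(x + α p)| ≤ γ for all x ∈ ℝ^d, all unit vectors p ∈ ℝ^d, all α ∈ ℝ, and all j = 1, …, n. Let f : ℝ^d → ℝ be a continuous function such that f(x) ∈ {f₁(x), …, fₙ(x)} for every x ∈ ℝ^d. Then for every xₖ ∈ ℝ^d and every x ∈ ℝ^d: f(x) ≥ qₖ(x) := f(xₖ) + min_{j=1,…,n} ( ∇fⱼ(xₖ)ᵀ (x − xₖ) ) − (γ/2) ‖x − xₖ‖², where ∇fⱼ denotes the gradient and ‖·‖ the Euclidean norm. -/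
/-!
Restrict everything to the ray `t ↦ xₖ + t • p` through `x`, with `p` a unit vector. There `f`
becomes a continuous selection `g` of the pieces `gⱼ`. Since finitely many closed coincidence
sets `{g = gⱼ}` cover every right neighbourhood of `t`, one of them contains `t` and accumulates
at `t` from the right; along it the difference quotients of `g` are those of `gⱼ`. So the lower
right Dini derivative of `g` at `t` is at least `gⱼ'(t) ≥ gⱼ'(0) - γ t ≥ minⱼ gⱼ'(0) - γ t`, and
the fencing theorem bounds `g` below by the quadratic with that derivative.
-/

open Filter Set Topology

theorem le_image_of_deriv_boundary_le_limsup_slope_right {f : ℝ → ℝ} {a b : ℝ}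
    (hf : ContinuousOn f (Icc a b)) {B B' : ℝ → ℝ} (ha : B a ≤ f a)
    (hB : ∀ x, HasDerivAt B (B' x) x)
    (bound : ∀ x ∈ Ico a b, ∀ r < B' x, ∃ᶠ z in 𝓝[>] x, r < slope f x z) :
    ∀ ⦃x⦄, x ∈ Icc a b → B x ≤ f x := by
  have h := image_le_of_liminf_slope_right_le_deriv_boundary (f := fun t => -f t)
    (B := fun t => -B t) (B' := fun t => -B' t)
    hf.neg (neg_le_neg ha) (fun x _ => (hB x).neg.continuousAt.continuousWithinAt)
    (fun x _ => (hB x).neg.hasDerivWithinAt) fun x hx r hr =>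
      (bound x hx (-r) (neg_lt.1 hr)).mono fun z hz => by rwa [slope_neg, neg_lt]
  exact fun x hx => neg_le_neg_iff.1 (h hx)

theorem HasDerivAt.frequently_lt_slope_of_frequently_eq {g h : ℝ → ℝ} {h' x : ℝ}
    (hh : HasDerivAt h h' x) (hx : g x = h x) (hfreq : ∃ᶠ z in 𝓝[>] x, g z = h z)
    {r : ℝ} (hr : r < h') : ∃ᶠ z in 𝓝[>] x, r < slope g x z := by
  have hslope : Tendsto (slope h x) (𝓝[>] x) (𝓝 h') :=
    hh.tendsto_slope.mono_left (nhdsWithin_mono _ fun _ hz => ne_of_gt hz)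
  refine (hfreq.and_eventually (hslope.eventually (lt_mem_nhds hr))).mono ?_
  rintro z ⟨hz, hrz⟩
  rwa [slope_def_field, hz, hx, ← slope_def_field]

theorem exists_eq_and_frequently_eq_of_forall_exists_eq {ι X Y : Type*} [Finite ι]
    [TopologicalSpace X] [TopologicalSpace Y] [T2Space Y] {g : X → Y} {gs : ι → X → Y}
    (hg : Continuous g) (hgs : ∀ j, Continuous (gs j)) (hsel : ∀ x, ∃ j, g x = gs j x)
    {x : X} {l : Filter X} [l.NeBot] (hl : l ≤ 𝓝 x) :
    ∃ j, g x = gs j x ∧ ∃ᶠ z in l, g z = gs j z := by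
  obtain ⟨j, hj⟩ : ∃ j, ∃ᶠ z in l, g z = gs j z := by
    by_contra! h
    obtain ⟨z, hz⟩ := (eventually_all.2 h).exists
    obtain ⟨j, hj⟩ := hsel z
    exact hz j hj
  have hclosed : IsClosed {z | g z = gs j z} := isClosed_eq hg (hgs j)
  exact ⟨j, hclosed.mem_of_frequently_of_tendsto hj hl, hj⟩

theorem deriv_sub_mul_le_deriv_of_abs_deriv_deriv_le {g : ℝ → ℝ} {γ : ℝ}
    (hg : Differentiable ℝ (deriv g)) (hb : ∀ t, |deriv (deriv g) t| ≤ γ) {a t : ℝ}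
    (hat : a ≤ t) : deriv g a - γ * (t - a) ≤ deriv g t := by
  have h := Convex.norm_image_sub_le_of_norm_deriv_le (fun x _ => hg x)
    (fun x _ => (hb x : ‖deriv (deriv g) x‖ ≤ γ)) convex_univ (mem_univ a) (mem_univ t)
  rw [Real.norm_eq_abs, Real.norm_eq_abs, abs_of_nonneg (sub_nonneg.2 hat)] at h
  linarith [neg_abs_le (deriv g t - deriv g a)]

theorem quadratic_model_le_of_continuous_selection {ι : Type*} [Finite ι] {gs : ι → ℝ → ℝ}
    {γ : ℝ} (hgs : ∀ j, Differentiable ℝ (gs j))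
    (hderiv : ∀ j t, 0 ≤ t → deriv (gs j) 0 - γ * t ≤ deriv (gs j) t)
    {g : ℝ → ℝ} (hg : Continuous g) (hsel : ∀ t, ∃ j, g t = gs j t) {T : ℝ} (hT : 0 ≤ T) :
    g 0 + (⨅ j, deriv (gs j) 0) * T - γ / 2 * T ^ 2 ≤ g T := by
  set m := ⨅ j, deriv (gs j) 0
  have hB : ∀ t, HasDerivAt (fun t => g 0 + m * t - γ / 2 * t ^ 2) (m - γ * t) t := fun t => by
    have := (((hasDerivAt_id t).const_mul m).const_add (g 0)).sub
      ((hasDerivAt_pow 2 t).const_mul (γ / 2))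
    exact this.congr_deriv (by norm_num; ring)
  refine le_image_of_deriv_boundary_le_limsup_slope_right hg.continuousOn (by simp) hB
    (fun x hx r hr => ?_) (right_mem_Icc.2 hT)
  obtain ⟨j, hjx, hj⟩ := exists_eq_and_frequently_eq_of_forall_exists_eq hg
    (fun j => (hgs j).continuous) hsel (l := 𝓝[>] x) nhdsWithin_le_nhds
  have hm : m ≤ deriv (gs j) 0 := ciInf_le (finite_range _).bddBelow j
  exact ((hgs j) x).hasDerivAt.frequently_lt_slope_of_frequently_eq hjx hj
    (by linarith [hderiv j x hx.1])

theorem quadratic_model_le_piecewise_analytic_multivariate_general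
    (d n : ℕ) (fs : Fin n → EuclideanSpace ℝ (Fin d) → ℝ)
    (hdiff : ∀ j : Fin n, Differentiable ℝ (fs j))
    (hline : ∀ j : Fin n, ∀ x p : EuclideanSpace ℝ (Fin d), ∀ t : ℝ,
        AnalyticAt ℝ (fun α : ℝ => fs j (x + α • p)) t)
    (γ : ℝ)
    (hbound : ∀ j : Fin n, ∀ x p : EuclideanSpace ℝ (Fin d), ‖p‖ = 1 → ∀ α : ℝ,
        |deriv (deriv (fun β : ℝ => fs j (x + β • p))) α| ≤ γ)
    (f : EuclideanSpace ℝ (Fin d) → ℝ) (hf : Continuous f)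
    (hpiece : ∀ x : EuclideanSpace ℝ (Fin d), ∃ j : Fin n, f x = fs j x) :
    ∀ xk x : EuclideanSpace ℝ (Fin d),
      f x ≥ f xk + (⨅ j : Fin n, fderiv ℝ (fs j) xk (x - xk)) - γ / 2 * ‖x - xk‖ ^ 2 := by
  intro xk x
  rcases eq_or_ne x xk with rfl | hx
  · simp [Real.iInf_const_zero]
  set r := ‖x - xk‖
  have hr : 0 < r := norm_pos_iff.2 (sub_ne_zero.2 hx)
  set p : EuclideanSpace ℝ (Fin d) := r⁻¹ • (x - xk)
  have hxp : xk + r • p = x := by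
    rw [smul_inv_smul₀ hr.ne', add_sub_cancel]
  have hline_deriv : ∀ j, deriv (fun α : ℝ => fs j (xk + α • p)) 0 =
      r⁻¹ * fderiv ℝ (fs j) xk (x - xk) := fun j => by
    rw [← lineDeriv, (hdiff j xk).lineDeriv_eq_fderiv, map_smul, smul_eq_mul]
  have hdiff' : ∀ j, Differentiable ℝ (deriv fun α : ℝ => fs j (xk + α • p)) := fun j =>
    differentiableOn_univ.1 (AnalyticOnNhd.deriv fun t _ => hline j xk p t).differentiableOn
  have hp : ‖p‖ = 1 := norm_smul_inv_norm (sub_ne_zero.2 hx)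
  have key := quadratic_model_le_of_continuous_selection
    (fun j t => (hline j xk p t).differentiableAt)
    (fun j t ht => by
      simpa using deriv_sub_mul_le_deriv_of_abs_deriv_deriv_le (hdiff' j) (hbound j xk p hp) ht)
    (g := fun α => f (xk + α • p)) (by fun_prop)
    (fun t => hpiece (xk + t • p)) hr.le
  simp only [hline_deriv, ← Real.mul_iInf_of_nonneg (inv_nonneg.2 hr.le), hxp, zero_smul,
    add_zero] at key
  rwa [mul_comm, mul_inv_cancel_left₀ hr.ne'] at key

/-- **The multivariate quadratic model lies underneath a continuous piecewise
function.** Let `f₁, …, fₙ : ℝ^d → ℝ` be differentiable, real-analytic along every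
line, with second derivatives along unit directions bounded in absolute value by `γ`,
and let `f : ℝ^d → ℝ` be continuous with `f(x) ∈ {f₁(x), …, fₙ(x)}` for all `x`.
Then for all `xₖ, x ∈ ℝ^d`:
`f(x) ≥ f(xₖ) + min_j ∇fⱼ(xₖ)ᵀ(x − xₖ) − (γ/2)‖x − xₖ‖²`. -/
theorem quadratic_model_le_piecewise_analytic_multivariate
    (d n : ℕ) (fs : Fin n → EuclideanSpace ℝ (Fin d) → ℝ)
    (hdiff : ∀ j : Fin n, Differentiable ℝ (fs j))
    (hline : ∀ j : Fin n, ∀ x p : EuclideanSpace ℝ (Fin d), ∀ t : ℝ,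
        AnalyticAt ℝ (fun α : ℝ => fs j (x + α • p)) t)
    (γ : ℝ) (hγ : 0 < γ)
    (hbound : ∀ j : Fin n, ∀ x p : EuclideanSpace ℝ (Fin d), ‖p‖ = 1 → ∀ α : ℝ,
        |deriv (deriv (fun β : ℝ => fs j (x + β • p))) α| ≤ γ)
    (f : EuclideanSpace ℝ (Fin d) → ℝ) (hf : Continuous f)
    (hpiece : ∀ x : EuclideanSpace ℝ (Fin d), ∃ j : Fin n, f x = fs j x) :
    ∀ xk x : EuclideanSpace ℝ (Fin d),
      f x ≥ f xk + (⨅ j : Fin n, fderiv ℝ (fs j) xk (x - xk)) - γ / 2 * ‖x - xk‖ ^ 2 :=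
  quadratic_model_le_piecewise_analytic_multivariate_general d n fs hdiff hline γ hbound f hf hpiece
end

section
/- Let B = ∏_{i=1}^d [aᵢ, bᵢ] ⊂ ℝ^d be a compact box, let f : ℝ^d → ℝ be continuous, and let f₁, …, fₙ : ℝ^d → ℝ be differentiable with f(x) ∈ {f₁(x), …, fₙ(x)} for all x. Let γ > 0 and μ ≥ 0 be such that ‖∇fⱼ(x)‖ ≤ μ for all x ∈ B and all j, and such that for every y ∈ B the quadratic model q_y(x) := f(y) + min_{j=1,…,n}(∇fⱼ(y)ᵀ(x − y)) − (γ/2)‖x − y‖² satisfies q_y(x) ≤ f(x) for all x ∈ ℝ^d. Let x₀ ∈ B be arbitrary and, for s ≥ 0, let x_{s+1} ∈ B be a global minimizer over B of q̄_s(x) := max_{k=0,…,s} q_{x_k}(x). Then every limit point of the sequence (x_s) is a global minimizer of f over B: if x* is the limit of a subsequence of (x_s), then f(x*) = min_{x ∈ B} f(x). -/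
/-- **Global convergence of the multidimensional algorithm (Theorem 4.1).** On a
compact box `B ⊂ ℝ^d`, with continuous `f` defined piecewise in terms of
differentiable pieces `f₁, …, fₙ` with gradients bounded by `μ` on `B`, and with
quadratic under-estimators `q_y(x) = f(y) + min_j ∇fⱼ(y)ᵀ(x−y) − (γ/2)‖x−y‖²`
satisfying `q_y ≤ f`, let `x₀ ∈ B` and let `x_{s+1}` be a global minimizer over `B`
of `q̄_s = max_{k ≤ s} q_{x_k}`. Then every limit point of the sequence `(x_s)` is a
global minimizer of `f` over `B`. -/
theorem limit_points_of_algorithm_are_global_minimizers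
    (d n : ℕ) (a b : Fin d → ℝ)
    (Box : Set (EuclideanSpace ℝ (Fin d)))
    (hBox : Box = {x : EuclideanSpace ℝ (Fin d) | ∀ i : Fin d, x i ∈ Set.Icc (a i) (b i)})
    (f : EuclideanSpace ℝ (Fin d) → ℝ) (hf : Continuous f)
    (fs : Fin n → EuclideanSpace ℝ (Fin d) → ℝ)
    (hdiff : ∀ j : Fin n, Differentiable ℝ (fs j))
    (hpiece : ∀ x : EuclideanSpace ℝ (Fin d), ∃ j : Fin n, f x = fs j x)
    (γ μ : ℝ) (hγ : 0 < γ) (hμ : 0 ≤ μ)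
    (hgrad : ∀ j : Fin n, ∀ x ∈ Box, ‖fderiv ℝ (fs j) x‖ ≤ μ)
    (q : EuclideanSpace ℝ (Fin d) → EuclideanSpace ℝ (Fin d) → ℝ)
    (hq : ∀ y x : EuclideanSpace ℝ (Fin d),
        q y x = f y + (⨅ j : Fin n, fderiv ℝ (fs j) y (x - y)) - γ / 2 * ‖x - y‖ ^ 2)
    (hunder : ∀ y ∈ Box, ∀ x : EuclideanSpace ℝ (Fin d), q y x ≤ f x)
    (x : ℕ → EuclideanSpace ℝ (Fin d))
    (hx0 : x 0 ∈ Box)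
    (hxmem : ∀ s : ℕ, x (s + 1) ∈ Box)
    (hxmin : ∀ s : ℕ, ∀ z ∈ Box,
        (⨆ k : Fin (s + 1), q (x ↑k) (x (s + 1))) ≤ ⨆ k : Fin (s + 1), q (x ↑k) z) :
    ∀ xstar : EuclideanSpace ℝ (Fin d),
      (∃ φ : ℕ → ℕ, StrictMono φ ∧ Filter.Tendsto (x ∘ φ) Filter.atTop (nhds xstar)) →
      xstar ∈ Box ∧ ∀ z ∈ Box, f xstar ≤ f z := by
  rintro xstar ⟨φ, hφ, hlim⟩
  have hmem : ∀ m : ℕ, x m ∈ Box := by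
    intro m; cases m with
    | zero => exact hx0
    | succ m => exact hxmem m
  haveI hne : Nonempty (Fin n) := ⟨(hpiece 0).choose⟩
  -- Box is closed
  have hclosed : IsClosed Box := by
    rw [hBox]
    have : {x : EuclideanSpace ℝ (Fin d) | ∀ i : Fin d, x i ∈ Set.Icc (a i) (b i)}
        = ⋂ i : Fin d, (fun x : EuclideanSpace ℝ (Fin d) => x i) ⁻¹' Set.Icc (a i) (b i) := by
      ext w; simp
    rw [this]
    exact isClosed_iInter fun i =>
      isClosed_Icc.preimage (EuclideanSpace.proj (𝕜 := ℝ) i).continuous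
  have hxstar : xstar ∈ Box :=
    hclosed.mem_of_tendsto hlim (Filter.Eventually.of_forall fun t => hmem (φ t))
  refine ⟨hxstar, fun z hz => ?_⟩
  -- key pointwise inequality
  have key : ∀ t : ℕ,
      f (x (φ t)) - μ * ‖x (φ (t + 1)) - x (φ t)‖
        - γ / 2 * ‖x (φ (t + 1)) - x (φ t)‖ ^ 2 ≤ f z := by
    intro t
    have hlt : φ t < φ (t + 1) := hφ (Nat.lt_succ_self t)
    obtain ⟨s, hs⟩ : ∃ s : ℕ, φ (t + 1) = s + 1 :=
      ⟨φ (t + 1) - 1, by omega⟩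
    rw [hs]
    set v := x (s + 1) - x (φ t) with hv
    have hinf : -(μ * ‖v‖) ≤ ⨅ j : Fin n, fderiv ℝ (fs j) (x (φ t)) v := by
      refine le_ciInf fun j => ?_
      have h1 := (fderiv ℝ (fs j) (x (φ t))).le_opNorm v
      have h2 := hgrad j (x (φ t)) (hmem (φ t))
      have h3 : -|fderiv ℝ (fs j) (x (φ t)) v| ≤ fderiv ℝ (fs j) (x (φ t)) v :=
        neg_abs_le _
      have h4 : ‖fderiv ℝ (fs j) (x (φ t)) v‖ = |fderiv ℝ (fs j) (x (φ t)) v| :=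
        Real.norm_eq_abs _
      nlinarith [norm_nonneg v]
    have A : f (x (φ t)) - μ * ‖v‖ - γ / 2 * ‖v‖ ^ 2 ≤ q (x (φ t)) (x (s + 1)) := by
      rw [hq]; rw [← hv]; linarith
    have hBdd : ∀ w, BddAbove (Set.range fun k : Fin (s + 1) => q (x ↑k) w) :=
      fun w => (Set.finite_range _).bddAbove
    have B : q (x (φ t)) (x (s + 1)) ≤ ⨆ k : Fin (s + 1), q (x ↑k) (x (s + 1)) :=
      le_ciSup (hBdd (x (s + 1))) (⟨φ t, by omega⟩ : Fin (s + 1))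
    have C := hxmin s z hz
    have D : (⨆ k : Fin (s + 1), q (x ↑k) z) ≤ f z :=
      ciSup_le fun k => hunder (x ↑k) (hmem k) z
    linarith
  -- pass to the limit
  have h1 : Filter.Tendsto (fun t => x (φ t)) Filter.atTop (nhds xstar) := hlim
  have h2 : Filter.Tendsto (fun t => x (φ (t + 1))) Filter.atTop (nhds xstar) :=
    h1.comp (Filter.tendsto_add_atTop_nat 1)
  have hd : Filter.Tendsto (fun t => ‖x (φ (t + 1)) - x (φ t)‖) Filter.atTop (nhds 0) := by
    have := (h2.sub h1).norm
    simpa using this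
  have hfc : Filter.Tendsto (fun t => f (x (φ t))) Filter.atTop (nhds (f xstar)) :=
    (hf.tendsto xstar).comp h1
  have hg : Filter.Tendsto
      (fun t => f (x (φ t)) - μ * ‖x (φ (t + 1)) - x (φ t)‖
        - γ / 2 * ‖x (φ (t + 1)) - x (φ t)‖ ^ 2) Filter.atTop
      (nhds (f xstar - μ * 0 - γ / 2 * 0 ^ 2)) :=
    (hfc.sub (tendsto_const_nhds.mul hd)).sub (tendsto_const_nhds.mul (hd.pow 2))
  have := le_of_tendsto hg (Filter.Eventually.of_forall key)
  simpa using this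
end

section
/- Under the setup of the multidimensional algorithm — B = ∏_{i=1}^d [aᵢ, bᵢ] ⊂ ℝ^d a compact box; f : ℝ^d → ℝ continuous; f₁, …, fₙ : ℝ^d → ℝ differentiable with f(x) ∈ {f₁(x), …, fₙ(x)} for all x and ‖∇fⱼ(x)‖ ≤ μ on B; quadratic models q_y(x) := f(y) + min_j(∇fⱼ(y)ᵀ(x − y)) − (γ/2)‖x − y‖² satisfying q_y ≤ f on ℝ^d for all y ∈ B; iterates x₀ ∈ B, x_{s+1} ∈ argmin_{x∈B} max_{k≤s} q_{x_k}(x); and lower bounds l_{s+1} := max_{k≤s} q_{x_k}(x_{s+1}) — the sequence of lower bounds converges to the global minimum: lim_{s→∞} l_s = min_{x∈B} f(x). -/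
open Filter Set


/-- **Convergence of the lower bounds of the multidimensional algorithm to the global
minimum.** Under the setup of the multidimensional algorithm — compact box `B ⊂ ℝ^d`,
continuous `f` defined piecewise by differentiable pieces `fⱼ` with `‖∇fⱼ‖ ≤ μ` on `B`,
quadratic under-estimators `q_y(x) = f(y) + min_j ∇fⱼ(y)ᵀ(x−y) − (γ/2)‖x−y‖² ≤ f(x)`,
iterates `x₀ ∈ B`, `x_{s+1} ∈ argmin_B max_{k ≤ s} q_{x_k}`, and lower bounds
`l_{s+1} = max_{k ≤ s} q_{x_k}(x_{s+1})` — the lower bounds converge to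
`min_{x ∈ B} f(x)`. -/
theorem lower_bounds_tendsto_global_minimum
    (d n : ℕ) (a b : Fin d → ℝ)
    (Box : Set (EuclideanSpace ℝ (Fin d)))
    (hBox : Box = {x : EuclideanSpace ℝ (Fin d) | ∀ i : Fin d, x i ∈ Set.Icc (a i) (b i)})
    (f : EuclideanSpace ℝ (Fin d) → ℝ) (hf : Continuous f)
    (fs : Fin n → EuclideanSpace ℝ (Fin d) → ℝ)
    (hdiff : ∀ j : Fin n, Differentiable ℝ (fs j))
    (hpiece : ∀ x : EuclideanSpace ℝ (Fin d), ∃ j : Fin n, f x = fs j x)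
    (γ μ : ℝ) (hγ : 0 < γ) (hμ : 0 ≤ μ)
    (hgrad : ∀ j : Fin n, ∀ x ∈ Box, ‖fderiv ℝ (fs j) x‖ ≤ μ)
    (q : EuclideanSpace ℝ (Fin d) → EuclideanSpace ℝ (Fin d) → ℝ)
    (hq : ∀ y x : EuclideanSpace ℝ (Fin d),
        q y x = f y + (⨅ j : Fin n, fderiv ℝ (fs j) y (x - y)) - γ / 2 * ‖x - y‖ ^ 2)
    (hunder : ∀ y ∈ Box, ∀ x : EuclideanSpace ℝ (Fin d), q y x ≤ f x)
    (x : ℕ → EuclideanSpace ℝ (Fin d))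
    (hx0 : x 0 ∈ Box)
    (hxmem : ∀ s : ℕ, x (s + 1) ∈ Box)
    (hxmin : ∀ s : ℕ, ∀ z ∈ Box,
        (⨆ k : Fin (s + 1), q (x ↑k) (x (s + 1))) ≤ ⨆ k : Fin (s + 1), q (x ↑k) z)
    (l : ℕ → ℝ)
    (hl : ∀ s : ℕ, l (s + 1) = ⨆ k : Fin (s + 1), q (x ↑k) (x (s + 1))) :
    Filter.Tendsto l Filter.atTop (nhds (sInf (f '' Box))) := by
  haveI : Nonempty (Fin n) := ⟨(hpiece 0).choose⟩
  have hxk : ∀ k : ℕ, x k ∈ Box := by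
    intro k; cases k with
    | zero => exact hx0
    | succ s => exact hxmem s
  -- Box is compact
  have hcompact : IsCompact Box := by
    have h1 : IsCompact (Set.univ.pi fun i => Set.Icc (a i) (b i)) :=
      isCompact_univ_pi fun i => isCompact_Icc
    have h2 : Box = (EuclideanSpace.equiv (Fin d) ℝ).toHomeomorph ⁻¹'
        (Set.univ.pi fun i => Set.Icc (a i) (b i)) := by
      rw [hBox]; ext z
      simp only [Set.mem_setOf_eq, Set.mem_preimage, Set.mem_pi, Set.mem_univ,
        forall_true_left]
      rfl
    rw [h2]
    exact (EuclideanSpace.equiv (Fin d) ℝ).toHomeomorph.isCompact_preimage.mpr h1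
  have hne : Box.Nonempty := ⟨x 0, hx0⟩
  set m := sInf (f '' Box) with hm
  have hbdd : BddBelow (f '' Box) := (hcompact.image_of_continuousOn hf.continuousOn).bddBelow
  have hmle : ∀ z ∈ Box, m ≤ f z := fun z hz => csInf_le hbdd ⟨z, hz, rfl⟩
  -- sup over Fin is bounded above
  have hbsup : ∀ (s : ℕ) (z : EuclideanSpace ℝ (Fin d)),
      BddAbove (Set.range fun k : Fin (s + 1) => q (x ↑k) z) :=
    fun s z => (Set.finite_range _).bddAbove
  -- l (s+1) ≤ m
  have hlm : ∀ s : ℕ, l (s + 1) ≤ m := by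
    intro s
    refine le_csInf ⟨f (x 0), ⟨x 0, hx0, rfl⟩⟩ ?_
    rintro y ⟨z, hz, rfl⟩
    rw [hl s]
    exact (hxmin s z hz).trans (ciSup_le fun k => hunder (x ↑k) (hxk ↑k) z)
  -- key: q (x k) (x (s+1)) ≤ l (s+1) for k ≤ s
  have hkey : ∀ s k : ℕ, k ≤ s → q (x k) (x (s + 1)) ≤ l (s + 1) := by
    intro s k hk
    rw [hl s]
    exact le_ciSup (hbsup s (x (s + 1))) ⟨k, Nat.lt_succ_of_le hk⟩
  -- monotonicity of s ↦ l (s+1)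
  have hmono : Monotone fun s => l (s + 1) := by
    apply monotone_nat_of_le_succ
    intro s
    rw [hl s, hl (s + 1)]
    refine le_trans (hxmin s (x (s + 2)) (hxmem (s + 1))) (ciSup_le fun k => ?_)
    have := le_ciSup (hbsup (s + 1) (x (s + 2))) (k.castSucc)
    simpa using this
  have hbL : BddAbove (Set.range fun s => l (s + 1)) :=
    ⟨m, by rintro y ⟨s, rfl⟩; exact hlm s⟩
  set L := ⨆ s, l (s + 1) with hLdef
  have htendL : Tendsto (fun s => l (s + 1)) atTop (nhds L) := tendsto_atTop_ciSup hmono hbL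
  have hLm : L ≤ m := ciSup_le hlm
  -- lower bound on q
  have hqlow : ∀ y ∈ Box, ∀ z : EuclideanSpace ℝ (Fin d),
      f y - μ * ‖z - y‖ - γ / 2 * ‖z - y‖ ^ 2 ≤ q y z := by
    intro y hy z
    rw [hq y z]
    have h1 : -(μ * ‖z - y‖) ≤ ⨅ j : Fin n, fderiv ℝ (fs j) y (z - y) := by
      refine le_ciInf fun j => ?_
      have h2 := (fderiv ℝ (fs j) y).le_opNorm (z - y)
      have h3 : ‖fderiv ℝ (fs j) y‖ * ‖z - y‖ ≤ μ * ‖z - y‖ :=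
        mul_le_mul_of_nonneg_right (hgrad j y hy) (norm_nonneg _)
      have h4 : |fderiv ℝ (fs j) y (z - y)| ≤ μ * ‖z - y‖ := by
        rw [← Real.norm_eq_abs]; exact h2.trans h3
      linarith [neg_abs_le (fderiv ℝ (fs j) y (z - y))]
    linarith
  -- compactness: convergent subsequence of s ↦ x (s+1)
  obtain ⟨xstar, hxstar, φ, hφ, htend⟩ :=
    hcompact.tendsto_subseq (x := fun s => x (s + 1)) (fun s => hxmem s)
  -- m ≤ L
  have hmL : m ≤ L := by
    have hy : Tendsto (fun t => x (φ t + 1)) atTop (nhds xstar) := htend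
    have hz : Tendsto (fun t => x (φ (t + 1) + 1)) atTop (nhds xstar) :=
      htend.comp (tendsto_add_atTop_nat 1)
    have hr : Tendsto (fun t => ‖x (φ (t + 1) + 1) - x (φ t + 1)‖) atTop (nhds 0) := by
      have := (hz.sub hy).norm
      simpa using this
    have hfy : Tendsto (fun t => f (x (φ t + 1))) atTop (nhds (f xstar)) :=
      (hf.tendsto xstar).comp hy
    have hg : Tendsto (fun t => f (x (φ t + 1)) - μ * ‖x (φ (t + 1) + 1) - x (φ t + 1)‖
        - γ / 2 * ‖x (φ (t + 1) + 1) - x (φ t + 1)‖ ^ 2) atTop (nhds (f xstar)) := by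
      have hc1 : Tendsto (fun _ : ℕ => μ) atTop (nhds μ) := tendsto_const_nhds
      have hc2 : Tendsto (fun _ : ℕ => γ / 2) atTop (nhds (γ / 2)) := tendsto_const_nhds
      have h := (hfy.sub (hc1.mul hr)).sub (hc2.mul (hr.pow 2))
      simpa using h
    have hle : ∀ t : ℕ, f (x (φ t + 1)) - μ * ‖x (φ (t + 1) + 1) - x (φ t + 1)‖
        - γ / 2 * ‖x (φ (t + 1) + 1) - x (φ t + 1)‖ ^ 2 ≤ L := by
      intro t
      have h1 := hqlow (x (φ t + 1)) (hxmem (φ t)) (x (φ (t + 1) + 1))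
      have h2 : q (x (φ t + 1)) (x (φ (t + 1) + 1)) ≤ l (φ (t + 1) + 1) :=
        hkey (φ (t + 1)) (φ t + 1) (Nat.succ_le_of_lt (hφ (Nat.lt_succ_self t)))
      have h3 : l (φ (t + 1) + 1) ≤ L := le_ciSup hbL (φ (t + 1))
      linarith
    have hfL : f xstar ≤ L := le_of_tendsto hg (Filter.Eventually.of_forall hle)
    exact (hmle xstar hxstar).trans hfL
  have hLm' : L = m := le_antisymm hLm hmL
  rw [← hLm'] at *
  exact (Filter.tendsto_add_atTop_iff_nat 1).mp htendL
end
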